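/- On the open set Ω = {(t,x) ∈ ℝ² : sin(2t) ≠ 0}, the function u(t,x) = 2·sin(2t)/(cosh(2x) − cos(2t)) is well defined (the denominator is positive there), nonvanishing, and satisfies the fast diffusion equation u_t = ∂/∂x (u_x / u). -/

import Mathlib

/-- Partial derivative with respect to the first variable (time). -/
noncomputable def pt (u : ℝ × ℝ → ℝ) (p : ℝ × ℝ) : ℝ :=
  deriv (fun s => u (s, p.2)) p.1

/-- Partial derivative with respect to the second variable (space). -/
noncomputable def px (u : ℝ × ℝ → ℝ) (p : ℝ × ℝ) : ℝ :=
  deriv (fun y => u (p.1, y)) p.2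

open Real

/- Writing `c = cos 2t`, `C = cosh 2x`, one has `u_x / u = -∂ₓ log (C - c) = -2 sinh 2x / (C - c)`,
and both `u_t` and `∂ₓ (u_x / u)` come out as `4 (c C - 1) / (C - c)²`: for `u_t` this uses
`sin² + cos² = 1`, for `∂ₓ (u_x / u)` it uses `cosh² - sinh² = 1`. -/

lemma Real.cos_lt_one_of_sin_ne_zero {a : ℝ} (h : sin a ≠ 0) : cos a < 1 :=
  (cos_le_one a).lt_of_ne fun h1 => h (sin_eq_zero_iff_cos_eq.2 (Or.inl h1))

lemma Real.cosh_sub_cos_pos {a : ℝ} (h : cos a < 1) (b : ℝ) : 0 < cosh b - cos a := by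
  linarith [one_le_cosh b]

lemma hasDerivAt_cosh_two_mul (y : ℝ) : HasDerivAt (fun y => cosh (2 * y)) (2 * sinh (2 * y)) y := by
  simpa [mul_comm] using ((hasDerivAt_id y).const_mul 2).cosh

lemma hasDerivAt_const_div_cosh_two_mul_sub (k c y : ℝ) (h : cosh (2 * y) - c ≠ 0) :
    HasDerivAt (fun y => k / (cosh (2 * y) - c))
      (-(2 * k * sinh (2 * y)) / (cosh (2 * y) - c) ^ 2) y :=
  ((hasDerivAt_const y k).div ((hasDerivAt_cosh_two_mul y).sub_const c) h).congr_deriv (by ring)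

lemma hasDerivAt_mul_sinh_two_mul_div_cosh_two_mul_sub (k c y : ℝ) (h : cosh (2 * y) - c ≠ 0) :
    HasDerivAt (fun y => k * sinh (2 * y) / (cosh (2 * y) - c))
      (2 * k * (1 - c * cosh (2 * y)) / (cosh (2 * y) - c) ^ 2) y := by
  have hnum : HasDerivAt (fun y => k * sinh (2 * y)) (k * (2 * cosh (2 * y))) y := by
    simpa [mul_comm] using (((hasDerivAt_id y).const_mul 2).sinh).const_mul k
  refine (hnum.div ((hasDerivAt_cosh_two_mul y).sub_const c) h).congr_deriv ?_
  congr 1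
  linear_combination 2 * k * cosh_sq_sub_sinh_sq (2 * y)

lemma hasDerivAt_mul_sin_two_mul_div_sub_cos_two_mul (k C t : ℝ) (h : C - cos (2 * t) ≠ 0) :
    HasDerivAt (fun s => k * sin (2 * s) / (C - cos (2 * s)))
      (2 * k * (C * cos (2 * t) - 1) / (C - cos (2 * t)) ^ 2) t := by
  have hnum : HasDerivAt (fun s => k * sin (2 * s)) (k * (2 * cos (2 * t))) t := by
    simpa [mul_comm] using (((hasDerivAt_id t).const_mul 2).sin).const_mul k
  have hden : HasDerivAt (fun s => C - cos (2 * s)) (2 * sin (2 * t)) t := by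
    simpa [mul_comm] using (((hasDerivAt_id t).const_mul 2).cos).const_sub C
  refine (hnum.div hden h).congr_deriv ?_
  congr 1
  linear_combination -2 * k * sin_sq_add_cos_sq (2 * t)

theorem fast_diffusion_solution_mixed
    (u : ℝ × ℝ → ℝ)
    (hu : u = fun p => 2 * Real.sin (2 * p.1) / (Real.cosh (2 * p.2) - Real.cos (2 * p.1)))
    (Ω : Set (ℝ × ℝ)) (hΩ : Ω = {p : ℝ × ℝ | Real.sin (2 * p.1) ≠ 0}) :
    ∀ p ∈ Ω,
      0 < Real.cosh (2 * p.2) - Real.cos (2 * p.1) ∧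
      u p ≠ 0 ∧
      pt u p = px (fun q => px u q / u q) p := by
  subst hu hΩ
  rintro ⟨t, x⟩ (hs : sin (2 * t) ≠ 0)
  have hD := cosh_sub_cos_pos (cos_lt_one_of_sin_ne_zero hs)
  refine ⟨hD _, div_ne_zero (mul_ne_zero two_ne_zero hs) (hD _).ne', ?_⟩
  have hratio : ∀ y, px (fun p => 2 * sin (2 * p.1) / (cosh (2 * p.2) - cos (2 * p.1))) (t, y) /
      (2 * sin (2 * t) / (cosh (2 * y) - cos (2 * t))) =
      -2 * sinh (2 * y) / (cosh (2 * y) - cos (2 * t)) := by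
    intro y
    simp only [px]
    rw [(hasDerivAt_const_div_cosh_two_mul_sub _ _ y (hD (2 * y)).ne').deriv]
    field_simp [(hD (2 * y)).ne']
  show deriv _ t = deriv _ x
  simp only [hratio]
  rw [(hasDerivAt_mul_sin_two_mul_div_sub_cos_two_mul _ _ t (hD (2 * x)).ne').deriv,
    (hasDerivAt_mul_sinh_two_mul_div_cosh_two_mul_sub _ _ x (hD (2 * x)).ne').deriv]
  ring
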